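/- With F of characteristic 3, G = T_{3m}, and s the sum of all 3-elements of G, the annihilator Ann_{FG}(s) is a nil ideal and hence Ann_{FG}(s) ⊆ J(FG). -/

import Mathlib

/-- Relations of the presentation `T_{3m} = ⟨x, y | x^m = y^3 = 1, y⁻¹xy = x^t⟩`. -/
def T3mRels (m t : ℕ) : Set (FreeGroup (Fin 2)) :=
  {FreeGroup.of 0 ^ m, FreeGroup.of 1 ^ 3,
   (FreeGroup.of 1)⁻¹ * FreeGroup.of 0 * FreeGroup.of 1 * (FreeGroup.of 0 ^ t)⁻¹}

/-- The group `T_{3m}` given by the presentation `⟨x, y | x^m = y^3 = 1, y⁻¹xy = x^t⟩`. -/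
abbrev T3m (m t : ℕ) : Type := PresentedGroup (T3mRels m t)

/-- The generator `x` of `T_{3m}`. -/
def xg (m t : ℕ) : T3m m t := PresentedGroup.of 0

/-- The generator `y` of `T_{3m}`. -/
def yg (m t : ℕ) : T3m m t := PresentedGroup.of 1

/-!
Write `x̂ = ∑ xⁱ` and `Y` for the image of `y` in `F[G]`. Since `m ≡ 1 (mod 3)`, `x̂` is an
idempotent, and it commutes with `Y` because conjugation by `y` permutes the powers of `x`.
As `x̂ g x̂ = x̂ Yʲ` for every group element `g`, the corner `x̂ F[G] x̂ = x̂ F[Y]` is commutative.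
Now `s = 1 + x̂ (Y + Y²)` and `s² = 1 - x̂`, so `α s = s α = 0` forces `α` into the corner,
`α = x̂ Q(Y)`; then `0 = α s = Q(1) x̂ (1 + Y + Y²)`, and `x̂ (1 + Y + Y²) ≠ 0` (its coefficient at
`1` is `1`, as the `xⁱ yʲ` are distinct), so `Q(1) = 0`. In characteristic `3`,
`(Y - 1)³ = Y³ - 1 = 0`, hence `α³ = 0`. Finally a nilpotent element of a commutative corner
stays nilpotent after multiplication by any `r`, which puts it in the Jacobson radical.
-/

open Finset Polynomial

section GeomSum

variable {R : Type*} [Ring R] {m : ℕ} {a : R}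

lemma geom_sum_mul_pow_of_pow_eq_one (h : a ^ m = 1) (n : ℕ) :
    (∑ i ∈ range m, a ^ i) * a ^ n = ∑ i ∈ range m, a ^ i := by
  have h₁ : (∑ i ∈ range m, a ^ i) * a = ∑ i ∈ range m, a ^ i := by
    rw [← sub_eq_zero, ← mul_sub_one, geom_sum_mul, h, sub_self]
  induction n with
  | zero => rw [pow_zero, mul_one]
  | succ n ih => rw [pow_succ, ← mul_assoc, ih, h₁]

lemma pow_mul_geom_sum_of_pow_eq_one (h : a ^ m = 1) (n : ℕ) :
    a ^ n * ∑ i ∈ range m, a ^ i = ∑ i ∈ range m, a ^ i := by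
  have h₁ : a * ∑ i ∈ range m, a ^ i = ∑ i ∈ range m, a ^ i := by
    rw [← sub_eq_zero, ← sub_one_mul, mul_geom_sum, h, sub_self]
  induction n with
  | zero => rw [pow_zero, one_mul]
  | succ n ih => rw [pow_succ', mul_assoc, ih, h₁]

lemma geom_sum_mul_geom_sum_of_pow_eq_one (h : a ^ m = 1) :
    (∑ i ∈ range m, a ^ i) * (∑ i ∈ range m, a ^ i) = (m : R) * ∑ i ∈ range m, a ^ i := by
  simp [mul_sum, geom_sum_mul_pow_of_pow_eq_one h]

/-- When `m` is invertible, the averaging element of `⟨a⟩` does not depend on the generator. -/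
lemma geom_sum_pow_eq_of_pow_eq_one (h : a ^ m = 1) (hm : (m : R) = 1) {k l : ℕ}
    (hkl : (a ^ k) ^ l = a) : ∑ i ∈ range m, (a ^ k) ^ i = ∑ i ∈ range m, a ^ i := by
  have hk : (a ^ k) ^ m = 1 := by rw [← pow_mul, mul_comm, pow_mul, h, one_pow]
  have hpow (i : ℕ) : a ^ i * ∑ i ∈ range m, (a ^ k) ^ i = ∑ i ∈ range m, (a ^ k) ^ i := by
    simpa [pow_mul, hkl] using pow_mul_geom_sum_of_pow_eq_one hk (l * i)
  calc ∑ i ∈ range m, (a ^ k) ^ i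
      = (∑ i ∈ range m, a ^ i) * ∑ i ∈ range m, (a ^ k) ^ i := by simp [sum_mul, hpow, hm]
    _ = ∑ i ∈ range m, a ^ i := by
        simp [mul_sum, ← pow_mul, geom_sum_mul_pow_of_pow_eq_one h, hm]

end GeomSum

section Corner

variable {R : Type*} [Ring R] {e α : R}

lemma mem_jacobson_bot_of_forall_isNilpotent_mul (h : ∀ r, IsNilpotent (r * α)) :
    α ∈ (⊥ : Ideal R).jacobson := by
  refine Ideal.mem_jacobson_iff.2 fun r ↦ ?_
  obtain ⟨u, hu⟩ := (h r).isUnit_add_one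
  refine ⟨↑u⁻¹, ?_⟩
  rw [Ideal.mem_bot, mul_assoc, ← mul_add_one, ← hu, Units.inv_mul, sub_self]

lemma isNilpotent_mul_of_mem_corner (he : IsIdempotentElem e)
    (hcomm : ∀ a ∈ Subsemigroup.corner e, ∀ b ∈ Subsemigroup.corner e, Commute a b)
    (hα : α ∈ Subsemigroup.corner e) (hnil : IsNilpotent α) (r : R) :
    IsNilpotent (r * α) := by
  obtain ⟨heα, hαe⟩ := (Subsemigroup.mem_corner_iff he).1 hα
  set c := e * r * e
  have hc : Commute c α := hcomm c ⟨r, rfl⟩ α hα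
  have hαrα : α * r * α = c * α * α :=
    calc α * r * α = α * e * r * (e * α) := by rw [hαe, heα]
      _ = c * α * α := by rw [hc.eq]; simp only [c, mul_assoc]
  have hpow (n : ℕ) : (r * α) ^ (n + 1) = r * (c * α) ^ n * α := by
    induction n with
    | zero => simp
    | succ n ih =>
      rw [pow_succ, ih, pow_succ]
      simp only [mul_assoc] at hαrα ⊢
      rw [hαrα]
  obtain ⟨n, hn⟩ := hc.isNilpotent_mul_left hnil
  exact ⟨n + 1, by rw [hpow, hn, mul_zero, zero_mul]⟩

end Corner

namespace T3m

variable {m t : ℕ}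

lemma xg_pow_m : xg m t ^ m = 1 := by
  have h := PresentedGroup.one_of_mem (rels := T3mRels m t) (Set.mem_insert _ _)
  rwa [map_pow] at h

lemma yg_pow_three : yg m t ^ 3 = 1 := by
  have h := PresentedGroup.one_of_mem (rels := T3mRels m t)
    (Set.mem_insert_of_mem _ (Set.mem_insert _ _))
  rwa [map_pow] at h

lemma xg_mul_yg : xg m t * yg m t = yg m t * xg m t ^ t := by
  have h := PresentedGroup.one_of_mem (rels := T3mRels m t)
    (Set.mem_insert_of_mem _ (Set.mem_insert_of_mem _ rfl))
  simp only [map_mul, map_inv, map_pow, mul_inv_eq_one] at h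
  change (yg m t)⁻¹ * xg m t * yg m t = xg m t ^ t at h
  rw [← h, mul_assoc, mul_inv_cancel_left]

lemma closure_xg_yg : Subgroup.closure {xg m t, yg m t} = ⊤ := by
  rw [← PresentedGroup.closure_range_of]
  congr
  ext g
  simp [Fin.exists_fin_two, xg, yg, eq_comm]

def lift {H : Type*} [Group H] (a b : H) (ha : a ^ m = 1) (hb : b ^ 3 = 1)
    (hab : a * b = b * a ^ t) : T3m m t →* H :=
  PresentedGroup.toGroup (f := ![a, b]) <| by
    rintro r (rfl | rfl | rfl)
    · simpa using ha
    · simpa using hb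
    · simp only [map_mul, map_inv, map_pow, FreeGroup.lift_apply_of]
      simp [mul_assoc, hab]

@[simp] lemma lift_xg {H : Type*} [Group H] (a b : H) (ha : a ^ m = 1) (hb : b ^ 3 = 1)
    (hab : a * b = b * a ^ t) : lift a b ha hb hab (xg m t) = a :=
  PresentedGroup.toGroup.of _

@[simp] lemma lift_yg {H : Type*} [Group H] (a b : H) (ha : a ^ m = 1) (hb : b ^ 3 = 1)
    (hab : a * b = b * a ^ t) : lift a b ha hb hab (yg m t) = b :=
  PresentedGroup.toGroup.of _

def permX (m : ℕ) : Equiv.Perm (ZMod m × ZMod 3) := Equiv.addRight (1, 0)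

def permY (τ : (ZMod m)ˣ) : Equiv.Perm (ZMod m × ZMod 3) :=
  Equiv.prodCongr (MulAction.toPerm τ⁻¹) (Equiv.addRight 1)

lemma permX_pow_apply (n : ℕ) (p : ZMod m × ZMod 3) :
    (permX m ^ n) p = p + ((n : ZMod m), (0 : ZMod 3)) := by
  induction n generalizing p with
  | zero => simp
  | succ n ih =>
    rw [pow_succ', Equiv.Perm.mul_apply, ih]
    simp [permX, add_assoc]

lemma permY_pow_apply (τ : (ZMod m)ˣ) (n : ℕ) (p : ZMod m × ZMod 3) :
    (permY τ ^ n) p = (τ⁻¹ ^ n • p.1, p.2 + n) := by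
  induction n generalizing p with
  | zero => simp
  | succ n ih =>
    rw [pow_succ', Equiv.Perm.mul_apply, ih]
    simp [permY, pow_succ', mul_smul, add_assoc]

lemma permX_pow_m : permX m ^ m = 1 := by
  ext p <;> simp [permX_pow_apply]

lemma permY_pow_three {τ : (ZMod m)ˣ} (hτ : τ ^ 3 = 1) : permY τ ^ 3 = 1 := by
  ext p
  · simp [permY_pow_apply, inv_pow, hτ]
  · simp [permY_pow_apply, show (3 : ZMod 3) = 0 from rfl]

lemma permX_mul_permY (τ : (ZMod m)ˣ) (hτ : (τ : ZMod m) = t) :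
    permX m * permY τ = permY τ * permX m ^ t := by
  ext p
  · simp [permX, permY, Units.smul_def, ← hτ]
  · simp [permX, permY]

/-- In the permutation model `x ↦ permX`, `y ↦ permY t`, the element `xⁱ yʲ` sends `(0, 0)` to
`(i, j)`. -/
lemma eq_zero_of_xg_pow_mul_yg_pow_eq_one (ht : (t : ZMod m) ^ 3 = 1) {i j : ℕ}
    (hi : i < m) (hj : j < 3) (h : xg m t ^ i * yg m t ^ j = 1) : i = 0 ∧ j = 0 := by
  set τ := Units.ofPowEqOne _ 3 ht three_ne_zero
  have hτ : τ ^ 3 = 1 := Units.pow_ofPowEqOne _ _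
  have h' := congrArg (fun g ↦ lift (permX m) (permY τ) permX_pow_m (permY_pow_three hτ)
    (permX_mul_permY τ rfl) g (0, 0)) h
  simp [permX_pow_apply, permY_pow_apply, Prod.ext_iff, ZMod.natCast_eq_zero_iff] at h'
  exact ⟨Nat.eq_zero_of_dvd_of_lt h'.1 hi, Nat.eq_zero_of_dvd_of_lt h'.2 hj⟩

end T3m

namespace T3m

variable {F : Type*} [CommRing F] {m t : ℕ}

local notation "𝕏" => MonoidAlgebra.of F (T3m m t) (xg m t)
local notation "𝕐" => MonoidAlgebra.of F (T3m m t) (yg m t)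

variable (F m t) in
noncomputable def xhat : MonoidAlgebra F (T3m m t) :=
  ∑ i ∈ range m, MonoidAlgebra.of F (T3m m t) (xg m t ^ i)

lemma xhat_eq_geom_sum : xhat F m t = ∑ i ∈ range m, 𝕏 ^ i := by
  simp [xhat]

lemma of_xg_pow_m : 𝕏 ^ m = 1 := by rw [← map_pow, xg_pow_m, map_one]

lemma of_yg_pow_three : 𝕐 ^ 3 = 1 := by rw [← map_pow, yg_pow_three, map_one]

lemma xhat_mul_of_xg : xhat F m t * 𝕏 = xhat F m t := by
  simpa [xhat_eq_geom_sum] using geom_sum_mul_pow_of_pow_eq_one (of_xg_pow_m (F := F)) 1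

lemma isIdempotentElem_xhat (hm : (m : F) = 1) : IsIdempotentElem (xhat F m t) := by
  have hm' : (m : MonoidAlgebra F (T3m m t)) = 1 := by
    rw [← map_natCast (algebraMap F _), hm, map_one]
  rw [IsIdempotentElem, xhat_eq_geom_sum, geom_sum_mul_geom_sum_of_pow_eq_one of_xg_pow_m, hm',
    one_mul]

/-- Conjugation by `y` permutes the powers of `x` since `t` is invertible modulo `m`. -/
lemma commute_xhat_of_yg (hm : (m : F) = 1) (ht : t ^ 3 ≡ 1 [MOD m]) :
    Commute (xhat F m t) 𝕐 := by
  have hm' : (m : MonoidAlgebra F (T3m m t)) = 1 := by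
    rw [← map_natCast (algebraMap F _), hm, map_one]
  have hxy : SemiconjBy 𝕐 (𝕏 ^ t) 𝕏 := by
    rw [SemiconjBy, ← map_pow, ← map_mul, ← map_mul, xg_mul_yg]
  have hinv : (𝕏 ^ t) ^ (t ^ 2) = 𝕏 := by
    rw [← pow_mul, ← pow_succ', pow_eq_pow_mod _ of_xg_pow_m, ht, ← pow_eq_pow_mod _ of_xg_pow_m,
      pow_one]
  calc xhat F m t * 𝕐 = ∑ i ∈ range m, 𝕏 ^ i * 𝕐 := by rw [xhat_eq_geom_sum, sum_mul]
    _ = 𝕐 * ∑ i ∈ range m, (𝕏 ^ t) ^ i := by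
      rw [mul_sum]
      exact sum_congr rfl fun i _ ↦ (hxy.pow_right i).symm
    _ = 𝕐 * xhat F m t := by
      rw [geom_sum_pow_eq_of_pow_eq_one of_xg_pow_m hm' hinv, xhat_eq_geom_sum]

lemma commute_xhat_aeval (hm : (m : F) = 1) (ht : t ^ 3 ≡ 1 [MOD m]) (P : F[X]) :
    Commute (xhat F m t) (aeval 𝕐 P) :=
  Algebra.commute_of_mem_adjoin_singleton_of_commute (aeval_mem_adjoin_singleton F _)
    (commute_xhat_of_yg hm ht)

lemma xhat_mul_aeval_mul_xhat_mul_aeval (hm : (m : F) = 1) (ht : t ^ 3 ≡ 1 [MOD m])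
    (P Q : F[X]) :
    xhat F m t * aeval 𝕐 P * (xhat F m t * aeval 𝕐 Q) = xhat F m t * aeval 𝕐 (P * Q) := by
  rw [mul_assoc, ← mul_assoc (aeval 𝕐 P), ← (commute_xhat_aeval hm ht P).eq, ← mul_assoc,
    ← mul_assoc, (isIdempotentElem_xhat hm).eq, mul_assoc, map_mul]

lemma exists_xhat_mul_of_eq (hm : (m : F) = 1) (ht : t ^ 3 ≡ 1 [MOD m]) (g : T3m m t) :
    ∃ j : ℕ, xhat F m t * MonoidAlgebra.of F _ g = xhat F m t * 𝕐 ^ j := by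
  have hmem : g ∈ Subgroup.closure {xg m t, yg m t} := closure_xg_yg ▸ Subgroup.mem_top g
  induction hmem using Subgroup.closure_induction'' with
  | one => exact ⟨0, by rw [map_one, pow_zero]⟩
  | mem g hg =>
    rcases hg with rfl | rfl
    · exact ⟨0, by rw [pow_zero, mul_one, xhat_mul_of_xg]⟩
    · exact ⟨1, by rw [pow_one]⟩
  | inv_mem g hg =>
    rcases hg with rfl | rfl
    · refine ⟨0, ?_⟩
      conv_lhs => rw [← xhat_mul_of_xg, mul_assoc, ← map_mul, mul_inv_cancel, map_one, mul_one]
      rw [pow_zero, mul_one]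
    · refine ⟨2, ?_⟩
      rw [inv_eq_of_mul_eq_one_right (pow_succ' (yg m t) 2 ▸ yg_pow_three), map_pow]
  | mul g h _ _ hg hh =>
    obtain ⟨j, hj⟩ := hg
    obtain ⟨k, hk⟩ := hh
    refine ⟨j + k, ?_⟩
    have hcomm := (commute_xhat_of_yg hm ht).pow_right j
    rw [map_mul, ← mul_assoc, hj, hcomm.eq, mul_assoc, hk, ← mul_assoc, ← hcomm.eq, mul_assoc,
      pow_add]

lemma exists_xhat_mul_mul_xhat_eq (hm : (m : F) = 1) (ht : t ^ 3 ≡ 1 [MOD m])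
    (r : MonoidAlgebra F (T3m m t)) :
    ∃ Q : F[X], xhat F m t * r * xhat F m t = xhat F m t * aeval 𝕐 Q := by
  induction r using MonoidAlgebra.induction_on with
  | of g =>
    obtain ⟨j, hj⟩ := exists_xhat_mul_of_eq hm ht g
    refine ⟨X ^ j, ?_⟩
    rw [hj, mul_assoc, ← ((commute_xhat_of_yg hm ht).pow_right j).eq, ← mul_assoc,
      (isIdempotentElem_xhat hm).eq, map_pow, aeval_X]
  | add r s hr hs =>
    obtain ⟨P, hP⟩ := hr
    obtain ⟨Q, hQ⟩ := hs
    exact ⟨P + Q, by rw [mul_add, add_mul, hP, hQ, map_add, mul_add]⟩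
  | smul c r hr =>
    obtain ⟨P, hP⟩ := hr
    exact ⟨c • P, by rw [mul_smul_comm, smul_mul_assoc, hP, map_smul, mul_smul_comm]⟩

lemma commute_of_mem_corner_xhat (hm : (m : F) = 1) (ht : t ^ 3 ≡ 1 [MOD m]) :
    ∀ a ∈ Subsemigroup.corner (xhat F m t), ∀ b ∈ Subsemigroup.corner (xhat F m t),
      Commute a b := by
  rintro _ ⟨r, rfl⟩ _ ⟨s, rfl⟩
  obtain ⟨P, hP⟩ := exists_xhat_mul_mul_xhat_eq hm ht r
  obtain ⟨Q, hQ⟩ := exists_xhat_mul_mul_xhat_eq hm ht s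
  simp only [hP, hQ, Commute, SemiconjBy, xhat_mul_aeval_mul_xhat_mul_aeval hm ht, mul_comm P]

lemma coeff_xhat_mul_aeval_one (ht : t ^ 3 ≡ 1 [MOD m]) (hm0 : m ≠ 0) :
    (xhat F m t * aeval 𝕐 (1 + X + X ^ 2 : F[X])).coeff 1 = 1 := by
  classical
  have ht' : (t : ZMod m) ^ 3 = 1 := by exact_mod_cast (ZMod.natCast_eq_natCast_iff _ _ _).2 ht
  have hexp : xhat F m t * aeval 𝕐 (1 + X + X ^ 2 : F[X]) =
      ∑ i ∈ range m, ∑ j ∈ range 3, MonoidAlgebra.of F _ (xg m t ^ i * yg m t ^ j) := by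
    simp [xhat, sum_mul, sum_range_succ, mul_add, sum_add_distrib]
  have hcoeff (i j : ℕ) (hi : i < m) (hj : j < 3) :
      (MonoidAlgebra.of F _ (xg m t ^ i * yg m t ^ j)).coeff 1 =
        if i = 0 ∧ j = 0 then 1 else 0 := by
    rw [MonoidAlgebra.of_apply, MonoidAlgebra.coeff_single, Finsupp.single_apply]
    refine if_congr ⟨eq_zero_of_xg_pow_mul_yg_pow_eq_one ht' hi hj, ?_⟩ rfl rfl
    rintro ⟨rfl, rfl⟩
    simp
  simp only [hexp, MonoidAlgebra.coeff_sum, Finsupp.coe_finsetSum, Finset.sum_apply]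
  rw [sum_congr rfl fun i hi ↦ sum_congr rfl fun j hj ↦
    hcoeff i j (mem_range.1 hi) (mem_range.1 hj)]
  simp [ite_and, Nat.pos_of_ne_zero hm0]

lemma aeval_X_pow_three_sub_one_mul (P : F[X]) : aeval 𝕐 ((X ^ 3 - 1) * P) = 0 := by
  rw [map_mul, map_sub, map_pow, aeval_X, map_one, of_yg_pow_three, sub_self, zero_mul]

variable (F m t) in
noncomputable def threeElementSum : MonoidAlgebra F (T3m m t) :=
  xhat F m t * MonoidAlgebra.of F _ (yg m t)⁻¹ + 1 + xhat F m t * 𝕐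

lemma threeElementSum_eq :
    threeElementSum F m t = 1 + xhat F m t * aeval 𝕐 (X + X ^ 2 : F[X]) := by
  have hinv : (yg m t)⁻¹ = yg m t ^ 2 :=
    inv_eq_of_mul_eq_one_right (pow_succ' (yg m t) 2 ▸ yg_pow_three)
  rw [threeElementSum, hinv, map_pow, map_add, map_pow, aeval_X, mul_add]
  abel

variable [CharP F 3]

lemma threeElementSum_mul_self (hm : (m : F) = 1) (ht : t ^ 3 ≡ 1 [MOD m]) :
    threeElementSum F m t * threeElementSum F m t = 1 - xhat F m t := by
  have h3 : (3 : F[X]) = 0 := by exact_mod_cast CharP.cast_eq_zero F[X] 3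
  rw [threeElementSum_eq]
  set W : F[X] := X + X ^ 2
  set u := xhat F m t * aeval 𝕐 W
  have hW : W * W + W + W = (X ^ 3 - 1) * (X + 2) - 1 := by
    linear_combination (X ^ 2 + X + 1 : F[X]) * h3
  have hu : u * u + u + u = -xhat F m t := by
    rw [xhat_mul_aeval_mul_xhat_mul_aeval hm ht, ← mul_add, ← mul_add, ← map_add, ← map_add, hW,
      map_sub, aeval_X_pow_three_sub_one_mul, map_one, zero_sub, mul_neg_one]
  calc (1 + u) * (1 + u) = 1 + (u * u + u + u) := by noncomm_ring
    _ = 1 - xhat F m t := by rw [hu, sub_eq_add_neg]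

lemma xhat_mul_aeval_X_sub_one_mul_pow_three (hm : (m : F) = 1) (ht : t ^ 3 ≡ 1 [MOD m])
    (K : F[X]) : (xhat F m t * aeval 𝕐 ((X - 1) * K)) ^ 3 = 0 := by
  rw [pow_three, xhat_mul_aeval_mul_xhat_mul_aeval hm ht, xhat_mul_aeval_mul_xhat_mul_aeval hm ht,
    ← pow_three, mul_pow, sub_pow_char, one_pow, aeval_X_pow_three_sub_one_mul, mul_zero]

section Annihilator

variable {α : MonoidAlgebra F (T3m m t)} (hm : (m : F) = 1) (ht : t ^ 3 ≡ 1 [MOD m])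
  (h₁ : α * threeElementSum F m t = 0) (h₂ : threeElementSum F m t * α = 0)
include hm ht h₁ h₂

/-- Since `s² = 1 - x̂`, anything annihilated by `s` is fixed by `x̂`. -/
lemma mem_corner_xhat_of_mul_threeElementSum_eq_zero :
    α ∈ Subsemigroup.corner (xhat F m t) := by
  refine (Subsemigroup.mem_corner_iff (isIdempotentElem_xhat hm)).2 ⟨?_, ?_⟩
  · refine (sub_eq_zero.1 ?_).symm
    rw [← one_sub_mul, ← threeElementSum_mul_self hm ht, mul_assoc, h₂, mul_zero]
  · refine (sub_eq_zero.1 ?_).symm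
    rw [← mul_one_sub, ← threeElementSum_mul_self hm ht, ← mul_assoc, h₁, zero_mul]

lemma exists_eq_xhat_mul_aeval_X_sub_one_mul :
    ∃ K : F[X], α = xhat F m t * aeval 𝕐 ((X - 1) * K) := by
  obtain ⟨hxα, hαx⟩ := (Subsemigroup.mem_corner_iff (isIdempotentElem_xhat hm)).1
    (mem_corner_xhat_of_mul_threeElementSum_eq_zero hm ht h₁ h₂)
  obtain ⟨Q, hQ⟩ := exists_xhat_mul_mul_xhat_eq hm ht α
  rw [hxα, hαx] at hQ
  obtain ⟨K, hK⟩ := X_sub_C_dvd_sub_C_eval (a := 1) (p := Q)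
  set c := Q.eval 1
  rw [map_one] at hK
  have hcK : Q + Q * (X + X ^ 2) = C c * (1 + X + X ^ 2) + (X ^ 3 - 1) * K := by
    linear_combination (1 + X + X ^ 2 : F[X]) * hK
  have hs : α * threeElementSum F m t = c • (xhat F m t * aeval 𝕐 (1 + X + X ^ 2 : F[X])) := by
    rw [threeElementSum_eq, mul_add, mul_one, ← mul_assoc, hαx, hQ, mul_assoc, ← map_mul,
      ← mul_add, ← map_add, hcK, map_add, aeval_X_pow_three_sub_one_mul, add_zero, map_mul,
      aeval_C, Algebra.smul_def, ← mul_assoc, ← mul_assoc, Algebra.commutes c (xhat F m t)]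
  have : Nontrivial F := CharP.nontrivial_of_char_ne_one (v := 3) (by norm_num)
  have hm0 : m ≠ 0 := by
    rintro rfl
    simp at hm
  have hc : c = 0 := by
    have hcoeff := congrArg (MonoidAlgebra.coeff · 1) hs
    rwa [h₁, MonoidAlgebra.coeff_smul_apply, coeff_xhat_mul_aeval_one ht hm0, smul_eq_mul,
      mul_one, eq_comm] at hcoeff
  exact ⟨K, by rw [hQ, ← hK, hc, map_zero, sub_zero]⟩

lemma pow_three_eq_zero_of_mul_threeElementSum_eq_zero : α ^ 3 = 0 := by
  obtain ⟨K, rfl⟩ := exists_eq_xhat_mul_aeval_X_sub_one_mul hm ht h₁ h₂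
  exact xhat_mul_aeval_X_sub_one_mul_pow_three hm ht K

end Annihilator

end T3m

theorem ann_s_nil_subset_jacobson_general (F : Type*) [Field F] [CharP F 3] (m t k : ℕ)
    (hm : m = 3 * k + 1) (ht : t ^ 3 % m = 1 % m) :
    letI G := T3m m t
    letI xhat : MonoidAlgebra F G := ∑ i ∈ Finset.range m, MonoidAlgebra.of F G (xg m t ^ i)
    letI s : MonoidAlgebra F G :=
      xhat * MonoidAlgebra.of F G (yg m t)⁻¹ + 1 + xhat * MonoidAlgebra.of F G (yg m t)
    ∀ α : MonoidAlgebra F G, (α * s = 0 ∧ s * α = 0) →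
      (∃ n : ℕ, α ^ n = 0) ∧ α ∈ (⊥ : Ideal (MonoidAlgebra F G)).jacobson := by
  intro α ⟨h₁, h₂⟩
  have hm' : (m : F) = 1 := by
    rw [hm, Nat.cast_add, Nat.cast_mul, CharP.cast_eq_zero, zero_mul, zero_add, Nat.cast_one]
  have hα : IsNilpotent α :=
    ⟨3, T3m.pow_three_eq_zero_of_mul_threeElementSum_eq_zero hm' ht h₁ h₂⟩
  refine ⟨hα, mem_jacobson_bot_of_forall_isNilpotent_mul fun r ↦ ?_⟩
  exact isNilpotent_mul_of_mem_corner (T3m.isIdempotentElem_xhat hm')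
    (T3m.commute_of_mem_corner_xhat hm' ht)
    (T3m.mem_corner_xhat_of_mul_threeElementSum_eq_zero hm' ht h₁ h₂) hα r

/-- For `F` of characteristic 3, `G = T_{3m}` and `s` the sum of all 3-elements, every
element of `Ann_{FG}(s)` is nilpotent and `Ann_{FG}(s) ⊆ J(FG)`. -/
theorem ann_s_nil_subset_jacobson (F : Type*) [Field F] [CharP F 3] (m t k : ℕ)
    (ht1 : 1 ≤ t) (hm : m = 3 * k + 1) (ht : t ^ 3 % m = 1 % m)
    (hgcd : Nat.gcd m (t - 1) = 1) :
    letI G := T3m m t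
    letI xhat : MonoidAlgebra F G := ∑ i ∈ Finset.range m, MonoidAlgebra.of F G (xg m t ^ i)
    letI s : MonoidAlgebra F G :=
      xhat * MonoidAlgebra.of F G (yg m t)⁻¹ + 1 + xhat * MonoidAlgebra.of F G (yg m t)
    ∀ α : MonoidAlgebra F G, (α * s = 0 ∧ s * α = 0) →
      (∃ n : ℕ, α ^ n = 0) ∧ α ∈ (⊥ : Ideal (MonoidAlgebra F G)).jacobson :=
  ann_s_nil_subset_jacobson_general F m t k hm ht
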